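/- Let F = F_{ξη}[A] = (A*, R) be a tree frame (ξ ∈ {i, r}, η ∈ {n, t}) with 0 ∉ A. Then the zero-forgetting map f_F is a bounded morphism from the neighborhood frame N_ω(F) onto the neighborhood frame N(F). -/

import Mathlib

set_option autoImplicit false

/-- Modal formulas with `n` modalities (propositional letters indexed by `ℕ`). -/
inductive MFormula (n : ℕ) : Type
  | prop : ℕ → MFormula n
  | bot  : MFormula n
  | imp  : MFormula n → MFormula n → MFormula n
  | box  : Fin n → MFormula n → MFormula n

namespace MFormula

/-- Negation as an abbreviation: ¬φ := φ → ⊥. -/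
def neg {n : ℕ} (φ : MFormula n) : MFormula n := φ.imp .bot

/-- Uniform substitution of formulas for propositional letters. -/
def subst {n : ℕ} (s : ℕ → MFormula n) : MFormula n → MFormula n
  | prop p  => s p
  | bot     => bot
  | imp φ ψ => imp (φ.subst s) (ψ.subst s)
  | box i φ => box i (φ.subst s)

end MFormula

/-- A classical tautology: true under every boolean valuation of formulas
(a valuation respecting `⊥` and `→`, arbitrary on letters and boxed formulas). -/
def IsTautology {n : ℕ} (φ : MFormula n) : Prop :=
  ∀ v : MFormula n → Prop,
    ¬ v .bot → (∀ ψ χ : MFormula n, v (ψ.imp χ) ↔ (v ψ → v χ)) → v φ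

/-- Normal modal logics with `n` modalities. -/
structure IsNormalLogic {n : ℕ} (L : Set (MFormula n)) : Prop where
  taut : ∀ φ : MFormula n, IsTautology φ → φ ∈ L
  kax : ∀ (i : Fin n) (p q : MFormula n),
    ((MFormula.box i (p.imp q)).imp ((MFormula.box i p).imp (MFormula.box i q))) ∈ L
  mp : ∀ φ ψ : MFormula n, φ.imp ψ ∈ L → φ ∈ L → ψ ∈ L
  subst : ∀ (φ : MFormula n) (s : ℕ → MFormula n), φ ∈ L → φ.subst s ∈ L
  nec : ∀ (i : Fin n) (φ : MFormula n), φ ∈ L → MFormula.box i φ ∈ L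

/-- The smallest normal logic containing `Γ`. -/
def NormalClosure {n : ℕ} (Γ : Set (MFormula n)) : Set (MFormula n) :=
  ⋂₀ {L : Set (MFormula n) | IsNormalLogic L ∧ Γ ⊆ L}

/-- The axiom □p → ¬□¬p. -/
def dAx : MFormula 1 :=
  (MFormula.box 0 (.prop 0)).imp (MFormula.neg (MFormula.box 0 (MFormula.neg (.prop 0))))

/-- The axiom □p → p. -/
def tAx : MFormula 1 := (MFormula.box 0 (.prop 0)).imp (.prop 0)

/-- The axiom □p → □□p. -/
def fourAx : MFormula 1 :=
  (MFormula.box 0 (.prop 0)).imp (MFormula.box 0 (MFormula.box 0 (.prop 0)))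

def LogicK : Set (MFormula 1) := NormalClosure ∅
def LogicD : Set (MFormula 1) := NormalClosure (LogicK ∪ {dAx})
def LogicT : Set (MFormula 1) := NormalClosure (LogicK ∪ {tAx})
def LogicD4 : Set (MFormula 1) := NormalClosure (LogicD ∪ {fourAx})
def LogicS4 : Set (MFormula 1) := NormalClosure (LogicT ∪ {fourAx})

/-- Translation of a unimodal formula into the bimodal language, replacing □ by □_i. -/
def trTo (i : Fin 2) : MFormula 1 → MFormula 2
  | .prop p  => .prop p
  | .bot     => .bot
  | .imp φ ψ => .imp (trTo i φ) (trTo i ψ)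
  | .box _ φ => .box i (trTo i φ)

/-- The fusion `L₁ ⊗ L₂` of two unimodal logics: the smallest bimodal normal logic
containing the translation of `L₁` (□ ↦ □₁) and of `L₂` (□ ↦ □₂). -/
def Fusion (L₁ L₂ : Set (MFormula 1)) : Set (MFormula 2) :=
  NormalClosure (trTo 0 '' L₁ ∪ trTo 1 '' L₂)

/-- Truth in a Kripke model. -/
def kSat {n : ℕ} {W : Type} (R : Fin n → W → W → Prop) (V : ℕ → Set W) :
    W → MFormula n → Prop
  | w, .prop p  => w ∈ V p
  | _, .bot     => False
  | w, .imp φ ψ => kSat R V w φ → kSat R V w ψ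
  | w, .box i φ => ∀ v : W, R i w v → kSat R V v φ

/-- The logic of a Kripke `n`-frame. -/
def KLogn {n : ℕ} {W : Type} [Nonempty W] (R : Fin n → W → W → Prop) :
    Set (MFormula n) :=
  {φ | ∀ (V : ℕ → Set W) (w : W), kSat R V w φ}

/-- The logic of a unimodal Kripke frame. -/
def KLog {W : Type} [Nonempty W] (R : W → W → Prop) : Set (MFormula 1) :=
  KLogn (fun _ => R)

/-- The logic of a bimodal Kripke frame. -/
def KLog2 {W : Type} [Nonempty W] (R₁ R₂ : W → W → Prop) : Set (MFormula 2) :=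
  KLogn ![R₁, R₂]

/-- Truth in a (monotone) neighborhood model: `x ⊨ □_i φ` iff the truth set of `φ`
belongs to the filter `τ i x`. -/
def nSat {n : ℕ} {X : Type} (τ : Fin n → X → Filter X) (V : ℕ → Set X) :
    X → MFormula n → Prop
  | x, .prop p  => x ∈ V p
  | _, .bot     => False
  | x, .imp φ ψ => nSat τ V x φ → nSat τ V x ψ
  | x, .box i φ => {y | nSat τ V y φ} ∈ τ i x

/-- The logic of a neighborhood `n`-frame. -/
def NLogn {n : ℕ} {X : Type} [Nonempty X] (τ : Fin n → X → Filter X) :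
    Set (MFormula n) :=
  {φ | ∀ (V : ℕ → Set X) (x : X), nSat τ V x φ}

/-- The logic of a unimodal neighborhood frame. -/
def NLog {X : Type} [Nonempty X] (τ : X → Filter X) : Set (MFormula 1) :=
  NLogn (fun _ => τ)

/-- The logic of a neighborhood 2-frame. -/
def NLog2 {X : Type} [Nonempty X] (τ₁ τ₂ : X → Filter X) : Set (MFormula 2) :=
  NLogn ![τ₁, τ₂]

/-- Validity of a unimodal formula in a neighborhood frame. -/
def NValid {X : Type} (τ : X → Filter X) (φ : MFormula 1) : Prop :=
  ∀ (V : ℕ → Set X) (x : X), nSat (fun _ => τ) V x φ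

/-- The neighborhood frame `N(F)` of a Kripke frame `F = (W, R)`:
`τ(w)` is the principal filter of `R(w)`. -/
def nOfK {W : Type} (R : W → W → Prop) (w : W) : Filter W :=
  Filter.principal {v | R w v}

/-- Bounded morphisms between neighborhood frames (with neighborhood functions
indexed by `ι`). -/
def IsNdMorphism {ι X Y : Type} (τ : ι → X → Filter X) (σ : ι → Y → Filter Y)
    (f : X → Y) : Prop :=
  Function.Surjective f ∧
    ∀ (i : ι) (x : X),
      (∀ U ∈ τ i x, f '' U ∈ σ i (f x)) ∧
      (∀ V ∈ σ i (f x), ∃ U ∈ τ i x, f '' U ⊆ V)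

/-- First neighborhood function of the product of two neighborhood frames:
`U ∈ τ'_1(x₁,x₂)` iff `∃ V ∈ τ₁ x₁, V × {x₂} ⊆ U`. -/
def prodTau1 {X₁ X₂ : Type} (τ₁ : X₁ → Filter X₁) (p : X₁ × X₂) :
    Filter (X₁ × X₂) :=
  (τ₁ p.1).map (fun x => (x, p.2))

/-- Second neighborhood function of the product of two neighborhood frames:
`U ∈ τ'_2(x₁,x₂)` iff `∃ V ∈ τ₂ x₂, {x₁} × V ⊆ U`. -/
def prodTau2 {X₁ X₂ : Type} (τ₂ : X₂ → Filter X₂) (p : X₁ × X₂) :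
    Filter (X₁ × X₂) :=
  (τ₂ p.2).map (fun y => (p.1, y))

/-- The successor relation on finite sequences: `a R b` iff `b = a·x` for some `x ∈ A`. -/
def sucRel (A : Type) (a b : List A) : Prop := ∃ x : A, b = a ++ [x]

/-- The four kinds of tree frames: irreflexive/reflexive, non-transitive/transitive. -/
inductive TreeKind : Type
  | inn  -- irreflexive non-transitive: F_in
  | rn   -- reflexive non-transitive: F_rn (reflexive closure)
  | itr  -- irreflexive transitive: F_it (transitive closure)
  | rt   -- reflexive transitive: F_rt (reflexive-transitive closure)

/-- The relation of the tree frame `F_{ξη}[A]` on `A*`. -/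
def treeRel (A : Type) : TreeKind → List A → List A → Prop
  | .inn => sucRel A
  | .rn  => fun a b => a = b ∨ sucRel A a b
  | .itr => Relation.TransGen (sucRel A)
  | .rt  => Relation.ReflTransGen (sucRel A)

/-- First relation of the product frame `F₁ ⊗ F₂` on `(A ⊔ B)*`:
`x R'_1 y` iff `y = x·z` for some `z ∈ A*` with `Λ R₁ z`. -/
def prodRel1 (A B : Type) (k : TreeKind) (x y : List (A ⊕ B)) : Prop :=
  ∃ z : List A, treeRel A k [] z ∧ y = x ++ z.map Sum.inl

/-- Second relation of the product frame `F₁ ⊗ F₂` on `(A ⊔ B)*`. -/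
def prodRel2 (A B : Type) (k : TreeKind) (x y : List (A ⊕ B)) : Prop :=
  ∃ z : List B, treeRel B k [] z ∧ y = x ++ z.map Sum.inr

/-- Pseudo-infinite sequences over `A ∪ {0}` (with `0` modelled by `none`, so
automatically `0 ∉ A`) that are eventually `0`. -/
def PSeq (A : Type) : Type :=
  {α : ℕ → Option A // ∃ N, ∀ k ≥ N, α k = none}

instance {A : Type} : Nonempty (PSeq A) := ⟨⟨fun _ => none, 0, fun _ _ => rfl⟩⟩

/-- `st(α)`: the least `N` such that `α` has only zeros from position `N` on. -/
noncomputable def PSeq.st {A : Type} (α : PSeq A) : ℕ :=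
  sInf {N | ∀ k ≥ N, α.1 k = none}

/-- `f_F(α)`: the finite sequence obtained from `α` by deleting all zeros. -/
noncomputable def PSeq.forget {A : Type} (α : PSeq A) : List A :=
  ((List.range α.st).map α.1).reduceOption

/-- The basic neighborhood `U_k(α)` of `α`, relative to the relation `R` on `A*`:
`{β ∈ X : α|_m = β|_m and f_F(α) R f_F(β)}` where `m = max(k, st(α))`. -/
def Unbhd {A : Type} (R : List A → List A → Prop) (k : ℕ) (α : PSeq A) :
    Set (PSeq A) :=
  {β | (∀ i < max k α.st, α.1 i = β.1 i) ∧ R α.forget β.forget}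

/-- The neighborhood function of `N_ω(F)`: `τ(α)` is the filter generated by the
base `{U_k(α) : k ∈ ℕ}`. -/
noncomputable def nOmega {A : Type} (R : List A → List A → Prop) (α : PSeq A) :
    Filter (PSeq A) :=
  ⨅ k : ℕ, Filter.principal (Unbhd R k α)

/-- The interleaving `x₁ y₁ x₂ y₂ …` of two pseudo-infinite sequences. -/
def interleave {A B : Type} (α : PSeq A) (β : PSeq B) : PSeq (A ⊕ B) :=
  ⟨fun n => if n % 2 = 0 then (α.1 (n / 2)).map Sum.inl
            else (β.1 (n / 2)).map Sum.inr, by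
    obtain ⟨N₁, h₁⟩ := α.2
    obtain ⟨N₂, h₂⟩ := β.2
    refine ⟨2 * max N₁ N₂, fun k hk => ?_⟩
    have hdiv : max N₁ N₂ ≤ k / 2 := by omega
    by_cases h : k % 2 = 0
    · simp [h, h₁ (k / 2) (le_trans (le_max_left _ _) hdiv)]
    · simp [h, h₂ (k / 2) (le_trans (le_max_right _ _) hdiv)]⟩

/-- The map `g`: delete all zeros from the interleaving of `α` and `β`. -/
noncomputable def gMap {A B : Type} (p : PSeq A × PSeq B) : List (A ⊕ B) :=
  (interleave p.1 p.2).forget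

/-!
Every relation of a tree frame only extends sequences. So if `f_F(α) R b`, then
`b = f_F(α) · z`, and `b` is the image of the sequence that agrees with `α` up to
`max(k, st(α))` and continues with `z`; this sequence lies in `U_k(α)`. Hence the image of every
neighborhood of `α` contains `R(f_F(α))`, while `U_0(α)` is mapped into `R(f_F(α))`.
-/

namespace PSeq

variable {A : Type}

lemma apply_eq_none_of_st_le (α : PSeq A) {k : ℕ} (hk : α.st ≤ k) : α.1 k = none :=
  Nat.sInf_mem α.2 k hk

lemma forget_eq_of_forall_ge (α : PSeq A) {N : ℕ} (h : ∀ k ≥ N, α.1 k = none) :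
    α.forget = ((List.range N).map α.1).reduceOption := by
  have hst : α.st ≤ N := Nat.sInf_le h
  obtain ⟨d, hd⟩ := Nat.exists_eq_add_of_le hst
  have htail : (((List.range d).map (α.st + ·)).map α.1).reduceOption = [] := by
    simp only [List.reduceOption, List.filterMap_eq_nil_iff, List.mem_map, List.mem_range]
    rintro _ ⟨_, ⟨i, -, rfl⟩, rfl⟩
    exact α.apply_eq_none_of_st_le (Nat.le_add_right _ _)
  rw [forget, hd, List.range_add, List.map_append, List.reduceOption_append, htail,
    List.append_nil]

def truncAppend (α : PSeq A) (m : ℕ) (z : List A) : PSeq A :=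
  ⟨fun n => if n < m then α.1 n else z[n - m]?, m + z.length, fun k hk => by
    simp only [if_neg (show ¬k < m by omega), List.getElem?_eq_none_iff]
    omega⟩

lemma truncAppend_apply_of_lt (α : PSeq A) (z : List A) {m n : ℕ} (hn : n < m) :
    (α.truncAppend m z).1 n = α.1 n :=
  if_pos hn

lemma truncAppend_apply_add (α : PSeq A) (m : ℕ) (z : List A) (i : ℕ) :
    (α.truncAppend m z).1 (m + i) = z[i]? := by
  simp [truncAppend]

lemma forget_truncAppend (α : PSeq A) (m : ℕ) (z : List A) :
    (α.truncAppend m z).forget = ((List.range m).map α.1).reduceOption ++ z := by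
  have hvanish : ∀ k ≥ m + z.length, (α.truncAppend m z).1 k = none := fun k hk => by
    simp only [truncAppend, if_neg (show ¬k < m by omega), List.getElem?_eq_none_iff]
    omega
  have hhead : (List.range m).map (α.truncAppend m z).1 = (List.range m).map α.1 :=
    List.map_congr_left fun n hn => α.truncAppend_apply_of_lt z (List.mem_range.mp hn)
  have htail : ((List.range z.length).map (m + ·)).map (α.truncAppend m z).1 = z.map some := by
    refine List.ext_getElem (by simp) fun i _ hi => ?_
    simp only [List.getElem_map, List.getElem_range, truncAppend_apply_add]
    exact List.getElem?_eq_getElem (by simpa using hi)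
  rw [forget_eq_of_forall_ge _ hvanish, List.range_add, List.map_append, hhead,
    htail, List.reduceOption_append]
  simp [List.reduceOption]

lemma forget_truncAppend_of_st_le (α : PSeq A) {m : ℕ} (hm : α.st ≤ m) (z : List A) :
    (α.truncAppend m z).forget = α.forget ++ z := by
  rw [forget_truncAppend,
    ← forget_eq_of_forall_ge α fun k hk => α.apply_eq_none_of_st_le (hm.trans hk)]

lemma forget_surjective : Function.Surjective (forget : PSeq A → List A) := fun z =>
  ⟨(Classical.arbitrary (PSeq A)).truncAppend 0 z, by simp [forget_truncAppend]⟩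

lemma truncAppend_mem_Unbhd {R : List A → List A → Prop} {α : PSeq A} {z : List A}
    (h : R α.forget (α.forget ++ z)) (k : ℕ) : α.truncAppend (max k α.st) z ∈ Unbhd R k α := by
  refine ⟨fun i hi => (α.truncAppend_apply_of_lt z hi).symm, ?_⟩
  rwa [forget_truncAppend_of_st_le α (le_max_right _ _)]

end PSeq

section

variable {A : Type}

lemma Unbhd_antitone (R : List A → List A → Prop) (α : PSeq A) :
    Antitone fun k => Unbhd R k α :=
  fun _ _ hkk' _ hβ => ⟨fun i hi => hβ.1 i (hi.trans_le (max_le_max hkk' le_rfl)), hβ.2⟩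

lemma nOmega_hasBasis (R : List A → List A → Prop) (α : PSeq A) :
    (nOmega R α).HasBasis (fun _ => True) (Unbhd R · α) :=
  Filter.hasBasis_iInf_principal (Unbhd_antitone R α).directed_ge

theorem isNdMorphism_forget {ι : Type} (R : List A → List A → Prop)
    (hR : ∀ a b, R a b → a <+: b) :
    IsNdMorphism (fun _ : ι => nOmega R) (fun _ : ι => nOfK R) PSeq.forget := by
  refine ⟨PSeq.forget_surjective, fun _ α => ⟨fun U hU => ?_, fun V hV => ?_⟩⟩
  · obtain ⟨k, -, hkU⟩ := (nOmega_hasBasis R α).mem_iff.mp hU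
    rintro b hb
    obtain ⟨z, rfl⟩ := hR _ _ hb
    exact ⟨_, hkU (PSeq.truncAppend_mem_Unbhd hb k),
      α.forget_truncAppend_of_st_le (le_max_right _ _) z⟩
  · refine ⟨Unbhd R 0 α, (nOmega_hasBasis R α).mem_of_mem trivial, ?_⟩
    rintro _ ⟨β, hβ, rfl⟩
    exact hV hβ.2

lemma treeRel_isPrefix (tk : TreeKind) {a b : List A} (h : treeRel A tk a b) : a <+: b := by
  have hsuc : ∀ {a b : List A}, sucRel A a b → a <+: b := by
    rintro a _ ⟨x, rfl⟩
    exact List.prefix_append a [x]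
  cases tk with
  | inn => exact hsuc h
  | rn => exact h.elim (fun hab => hab ▸ List.prefix_refl a) hsuc
  | itr => exact h.trans_induction_on hsuc fun _ _ => List.IsPrefix.trans
  | rt => exact h.rec (List.prefix_refl a) fun _ hbc hab => hab.trans (hsuc hbc)

end

theorem forget_boundedMorphism_general (A : Type) (tk : TreeKind) :
    IsNdMorphism (fun _ : Fin 1 => nOmega (treeRel A tk))
      (fun _ : Fin 1 => nOfK (treeRel A tk)) PSeq.forget :=
  isNdMorphism_forget _ fun _ _ => treeRel_isPrefix tk

/-- The zero-forgetting map `f_F` is a bounded morphism from the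
neighborhood frame `N_ω(F)` onto the neighborhood frame `N(F)`. -/
theorem forget_boundedMorphism (A : Type) [Nonempty A] (tk : TreeKind) :
    IsNdMorphism (fun _ : Fin 1 => nOmega (treeRel A tk))
      (fun _ : Fin 1 => nOfK (treeRel A tk)) PSeq.forget :=
  forget_boundedMorphism_general A tk
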